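/- Let n ≥ 2 be a real number, θ ∈ {0,1}, κ > 1, p ≥ 1, and for θ ∈ {0,1} define p_{θ,1} = κ/(1−θ) (with p_{1,1} = ∞, i.e. 1/p_{1,1} = 0), p_{θ,2} = p/(1+(p−1)θ), and r_θ = κnp/[κn − 2(κ−1)p − (κn − (κn−2)p)θ]_+ (with the convention c/0 = ∞). If 1 ≤ r < r_θ and r > p_{θ,2}, then −(n/2)·(1/p_{θ,2} − 1/r)·(1 − 1/p_{θ,1}) > −1. -/

import Mathlib

/-! Put `X = (n/2)(1/p_{θ,2} - 1/r)` and `s = 1 - 1/p_{θ,1}`. Clearing the positive denominator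
`2κpr`, the condition `r · D < κnp` (with `D` the bracket in `r_θ`) is exactly `X < s`, for every
`θ`. For `θ ∈ [0,1]` we have `0 < s ≤ 1`, hence `X s < s² ≤ 1`. -/

lemma decay_exponent_lt_iff {n κ p r θ : ℝ} (hκ : 0 < κ) (hp : 0 < p) (hr : 0 < r) :
    n / 2 * ((1 + (p - 1) * θ) / p - 1 / r) < 1 - (1 - θ) / κ ↔
      r * (κ * n - 2 * (κ - 1) * p - (κ * n - (κ * n - 2) * p) * θ) < κ * n * p := by
  have hgap : 1 - (1 - θ) / κ - n / 2 * ((1 + (p - 1) * θ) / p - 1 / r) =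
      (κ * n * p - r * (κ * n - 2 * (κ - 1) * p - (κ * n - (κ * n - 2) * p) * θ)) /
        (2 * κ * p * r) := by
    field_simp
    ring
  rw [← sub_pos, hgap, div_pos_iff_of_pos_right (by positivity), sub_pos]

theorem stmt_8_general (n κ p r θ : ℝ) (hκ : 1 < κ) (hp : 1 ≤ p)
    (hθ : θ = 0 ∨ θ = 1)
    (hr2 : r * max (κ * n - 2 * (κ - 1) * p - (κ * n - (κ * n - 2) * p) * θ) 0 < κ * n * p)
    (hr3 : r > p / (1 + (p - 1) * θ)) :
    -(n / 2) * (1 / (p / (1 + (p - 1) * θ)) - 1 / r) * (1 - (1 - θ) / κ) > -1 := by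
  obtain ⟨hθ0, hθ1⟩ : 0 ≤ θ ∧ θ ≤ 1 := by rcases hθ with rfl | rfl <;> norm_num
  have hp0 : 0 < p := by linarith
  have hκ0 : 0 < κ := by linarith
  have hr : 0 < r := lt_trans (div_pos hp0 (by nlinarith)) hr3
  have hs0 : 0 < 1 - (1 - θ) / κ := by
    rw [sub_pos, div_lt_one hκ0]
    linarith
  have hs1 : 1 - (1 - θ) / κ ≤ 1 := by
    rw [sub_le_self_iff]
    exact div_nonneg (by linarith) hκ0.le
  have hX : n / 2 * (1 / (p / (1 + (p - 1) * θ)) - 1 / r) < 1 - (1 - θ) / κ := by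
    rw [one_div_div, decay_exponent_lt_iff hκ0 hp0 hr]
    exact (mul_le_mul_of_nonneg_left (le_max_left _ _) hr.le).trans_lt hr2
  nlinarith [mul_lt_mul_of_pos_right hX hs0]

theorem stmt_8 (n κ p r θ : ℝ) (hn : 2 ≤ n) (hκ : 1 < κ) (hp : 1 ≤ p)
    (hθ : θ = 0 ∨ θ = 1)
    (hr1 : 1 ≤ r)
    (hr2 : r * max (κ * n - 2 * (κ - 1) * p - (κ * n - (κ * n - 2) * p) * θ) 0 < κ * n * p)
    (hr3 : r > p / (1 + (p - 1) * θ)) :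
    -(n / 2) * (1 / (p / (1 + (p - 1) * θ)) - 1 / r) * (1 - (1 - θ) / κ) > -1 :=
  stmt_8_general n κ p r θ hκ hp hθ hr2 hr3
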